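/- The closure, in the operator norm on bounded operators of H, of the linear span of the rank-one operators {θ_{λ,μ} : λ ∈ L, μ ∈ ℤ^r} equals the set of all compact operators K on H satisfying K(H_C) ⊆ H_C for every coset C ∈ ℤ^r/L. (This is the operator-theoretic core of the isomorphism C₀(Π*)⋊_ℓΠ ≅ ⊕_{[ξ]∈Π*/ℓΠ} 𝕂(L²([ξ])).) -/

import Mathlib

/-!
Each `θ_{λ,μ}` is rank one, hence compact, and preserves every `H_C`: on `H_C` it vanishes unless
`μ ∈ C`, and then its range `ℂ δ_{μ+λ}` lies in `H_C` since `λ ∈ L`. Compact operators preserving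
all `H_C` form a closed subspace, which gives one inclusion.

Conversely, let `P_F` be the coordinate projection onto `span {δ_μ : μ ∈ F}`. As `F` grows,
`P_F → 1` pointwise with `‖1 - P_F‖ ≤ 1`, so the convergence is uniform on the relatively compact
image of the unit ball under a compact `K`, i.e. `P_F K → K` in norm. The operator `P_F K` is a
finite sum of rank-one operators, so `P_F K P_G → P_F K` in norm as `G` grows. Finally
`P_F K P_G = ∑ ⟨δ_ν, K δ_μ⟩ θ_{ν-μ,μ}`, and block-diagonality of `K` kills the coefficients with
`ν - μ ∉ L`.
-/

open Finset

noncomputable section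

/-- The Hilbert space `H = ℓ²(ℤ^r; ℂ)`. -/
abbrev Hsp (r : ℕ) := lp (fun _ : (Fin r → ℤ) => ℂ) 2

/-- The standard orthonormal basis vector `δ_μ` of `ℓ²(ℤ^r; ℂ)`. -/
def deltaV {r : ℕ} (μ : Fin r → ℤ) : Hsp r := lp.single 2 μ 1

/-- The rank-one operator `θ_{λ,μ} : f ↦ ⟨δ_μ, f⟩·δ_{μ+λ}`. -/
def thetaOp {r : ℕ} (lam μ : Fin r → ℤ) : Hsp r →L[ℂ] Hsp r :=
  (innerSL ℂ (deltaV μ)).smulRight (deltaV (μ + lam))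

/-- The lattice `L = {ℓBη : η ∈ ℤ^r} ⊆ ℤ^r`, as an additive subgroup. -/
def latticeL {r : ℕ} (ℓ : ℤ) (B : Matrix (Fin r) (Fin r) ℤ) :
    AddSubgroup (Fin r → ℤ) :=
  (ℓ • B.mulVecLin).toAddMonoidHom.range

/-- For a coset `C ∈ ℤ^r/L`, the closed subspace `H_C ⊆ H` spanned by `{δ_μ : μ ∈ C}`. -/
def cosetSubspace {r : ℕ} (ℓ : ℤ) (B : Matrix (Fin r) (Fin r) ℤ)
    (q : (Fin r → ℤ) ⧸ latticeL ℓ B) : Set (Hsp r) :=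
  closure (↑(Submodule.span ℂ
    {v : Hsp r | ∃ μ : Fin r → ℤ, (QuotientAddGroup.mk μ : (Fin r → ℤ) ⧸ latticeL ℓ B) = q
      ∧ v = deltaV μ}) : Set (Hsp r))

open Filter Topology InnerProductSpace
open scoped InnerProduct

theorem tendsto_comp_nhds_zero_of_isCompactOperator {𝕜 E F ι : Type*} [RCLike 𝕜]
    [NormedAddCommGroup E] [NormedSpace 𝕜 E] [NormedAddCommGroup F] [NormedSpace 𝕜 F]
    {l : Filter ι} {S : ι → F →L[𝕜] F} {C : ℝ} (hC : ∀ i, ‖S i‖ ≤ C)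
    (hS : ∀ y, Tendsto (fun i => S i y) l (𝓝 0)) {K : E →L[𝕜] F} (hK : IsCompactOperator K) :
    Tendsto (fun i => S i ∘L K) l (𝓝 0) := by
  rw [Metric.tendsto_nhds]
  intro ε hε
  set δ := ε / (2 * (|C| + 1)) with hδ_def
  have hδ : 0 < δ := by positivity
  obtain ⟨M, hM, hKM⟩ := hK.image_closedBall_subset_compact (f := (K : E →ₗ[𝕜] F)) 1
  obtain ⟨t, -, ht, hMt⟩ := Metric.finite_approx_of_totallyBounded hM.totallyBounded δ hδ
  have hnet : ∀ᶠ i in l, ∀ y ∈ t, ‖S i y‖ < δ :=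
    (eventually_all_finite ht).2 fun y _ => by
      simpa using (hS y).eventually (Metric.ball_mem_nhds 0 hδ)
  filter_upwards [hnet] with i hi
  have hbound : ∀ x : E, ‖x‖ = 1 → ‖S i (K x)‖ ≤ ε / 2 := by
    intro x hx
    obtain ⟨y, hy, hxy⟩ : ∃ y ∈ t, dist (K x) y < δ := by
      simpa using hMt (hKM ⟨x, by simp [hx], rfl⟩)
    calc ‖S i (K x)‖ = ‖S i (K x - y) + S i y‖ := by rw [map_sub, sub_add_cancel]
      _ ≤ ‖S i‖ * ‖K x - y‖ + ‖S i y‖ := norm_add_le_of_le ((S i).le_opNorm _) le_rfl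
      _ ≤ |C| * δ + δ := by
        gcongr
        · exact (hC i).trans (le_abs_self C)
        · exact (dist_eq_norm (K x) y ▸ hxy).le
        · exact (hi y hy).le
      _ = ε / 2 := by rw [hδ_def]; field_simp
  rw [dist_zero_right]
  exact ((S i ∘L K).opNorm_le_of_unit_norm (by positivity) hbound).trans_lt (half_lt_self hε)

theorem isCompactOperator_rankOne {𝕜 E F : Type*} [RCLike 𝕜] [NormedAddCommGroup E]
    [NormedSpace 𝕜 E] [NormedAddCommGroup F] [InnerProductSpace 𝕜 F] (x : E) (y : F) :
    IsCompactOperator (rankOne 𝕜 x y) :=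
  (isCompactOperator_of_locallyCompactSpace_dom (innerSL 𝕜 y)).clm_comp
    (ContinuousLinearMap.toSpanSingleton 𝕜 x)

def invariantOperators {𝕜 E : Type*} [NontriviallyNormedField 𝕜] [NormedAddCommGroup E]
    [NormedSpace 𝕜 E] (V : Submodule 𝕜 E) : Submodule 𝕜 (E →L[𝕜] E) :=
  ⨅ v ∈ V, V.comap (ContinuousLinearMap.apply 𝕜 E v).toLinearMap

section InvariantOperators

variable {𝕜 E : Type*} [NontriviallyNormedField 𝕜] [NormedAddCommGroup E] [NormedSpace 𝕜 E]
  {V : Submodule 𝕜 E}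

theorem mem_invariantOperators {T : E →L[𝕜] E} : T ∈ invariantOperators V ↔ ∀ v ∈ V, T v ∈ V := by
  simp [invariantOperators]

theorem isClosed_invariantOperators (hV : IsClosed (V : Set E)) :
    IsClosed (invariantOperators V : Set (E →L[𝕜] E)) := by
  have h : (invariantOperators V : Set (E →L[𝕜] E)) = ⋂ v ∈ V, (fun T => T v) ⁻¹' V := by
    ext T
    simp [mem_invariantOperators]
  rw [h]
  exact isClosed_biInter fun v _ => hV.preimage (continuous_eval_const v)

end InvariantOperators

namespace lp

variable {ι : Type*} [DecidableEq ι]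

local notation "ℓ²" => lp (fun _ : ι => ℂ) 2

def finsetProj (F : Finset ι) : ℓ² →L[ℂ] ℓ² :=
  ∑ i ∈ F, rankOne ℂ (lp.single 2 i 1 : ℓ²) (lp.single 2 i 1)

theorem finsetProj_apply (F : Finset ι) (f : ℓ²) :
    finsetProj F f = ∑ i ∈ F, lp.single 2 i (f i) := by
  simp [finsetProj, lp.inner_single_left, ← lp.single_smul]

theorem tendsto_finsetProj_apply (f : ℓ²) : Tendsto (finsetProj · f) atTop (𝓝 f) := by
  simp_rw [finsetProj_apply]
  exact lp.hasSum_single ENNReal.ofNat_ne_top f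

theorem norm_sub_finsetProj_apply_le (F : Finset ι) (f : ℓ²) : ‖f - finsetProj F f‖ ≤ ‖f‖ := by
  have h := lp.norm_compl_sum_single (p := 2) (by norm_num) f F
  simp only [ENNReal.toReal_ofNat, Real.rpow_two, ← finsetProj_apply] at h
  have : 0 ≤ ∑ i ∈ F, ‖f i‖ ^ 2 := by positivity
  nlinarith [norm_nonneg (f - finsetProj F f), norm_nonneg f]

theorem isSelfAdjoint_finsetProj (F : Finset ι) : IsSelfAdjoint (finsetProj F) := by
  simp [ContinuousLinearMap.isSelfAdjoint_iff', finsetProj, map_sum]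

theorem tendsto_finsetProj_comp {E : Type*} [NormedAddCommGroup E] [NormedSpace ℂ E]
    {K : E →L[ℂ] ℓ²} (hK : IsCompactOperator K) :
    Tendsto (finsetProj · ∘L K) atTop (𝓝 K) := by
  have hbound (F : Finset ι) : ‖1 - finsetProj F‖ ≤ 1 :=
    ContinuousLinearMap.opNorm_le_bound _ zero_le_one fun f => by
      simpa using norm_sub_finsetProj_apply_le F f
  have hlim (f : ℓ²) : Tendsto (fun F => (1 - finsetProj F) f) atTop (𝓝 0) := by
    simpa using (tendsto_finsetProj_apply f).const_sub f
  have := tendsto_comp_nhds_zero_of_isCompactOperator hbound hlim hK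
  simpa [ContinuousLinearMap.sub_comp, ContinuousLinearMap.one_def] using
    (tendsto_const_nhds (x := K)).sub this

theorem finsetProj_comp_eq_sum (F : Finset ι) (K : ℓ² →L[ℂ] ℓ²) :
    finsetProj F ∘L K = ∑ i ∈ F, rankOne ℂ (lp.single 2 i 1 : ℓ²) ((K†) (lp.single 2 i 1)) := by
  simp [finsetProj, ContinuousLinearMap.finsetSum_comp, rankOne_comp]

theorem tendsto_finsetProj_comp_comp_finsetProj (F : Finset ι) (K : ℓ² →L[ℂ] ℓ²) :
    Tendsto (fun G => finsetProj F ∘L K ∘L finsetProj G) atTop (𝓝 (finsetProj F ∘L K)) := by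
  have h (G : Finset ι) : finsetProj F ∘L K ∘L finsetProj G = ∑ i ∈ F,
      rankOne ℂ (lp.single 2 i 1 : ℓ²) (finsetProj G ((K†) (lp.single 2 i 1))) := by
    rw [← ContinuousLinearMap.comp_assoc, finsetProj_comp_eq_sum,
      ContinuousLinearMap.finsetSum_comp]
    simp_rw [rankOne_comp, (isSelfAdjoint_finsetProj G).adjoint_eq]
  simp_rw [h]
  rw [finsetProj_comp_eq_sum]
  exact tendsto_finsetSum F fun i _ =>
    ((rankOne ℂ _).continuous.tendsto _).comp (tendsto_finsetProj_apply _)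

theorem finsetProj_comp_comp_finsetProj (F G : Finset ι) (K : ℓ² →L[ℂ] ℓ²) :
    finsetProj F ∘L K ∘L finsetProj G = ∑ i ∈ F, ∑ j ∈ G,
      inner ℂ (lp.single 2 i 1 : ℓ²) (K (lp.single 2 j 1)) •
        rankOne ℂ (lp.single 2 i 1 : ℓ²) (lp.single 2 j 1) := by
  simp [finsetProj, ContinuousLinearMap.comp_finsetSum, comp_rankOne, Finset.sum_comm (s := G)]

end lp

section Coset

variable {r : ℕ} {ℓ : ℤ} {B : Matrix (Fin r) (Fin r) ℤ}

def cosetSubmodule (ℓ : ℤ) (B : Matrix (Fin r) (Fin r) ℤ) (q : (Fin r → ℤ) ⧸ latticeL ℓ B) :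
    Submodule ℂ (Hsp r) :=
  (Submodule.span ℂ
    {v : Hsp r | ∃ μ : Fin r → ℤ, (QuotientAddGroup.mk μ : (Fin r → ℤ) ⧸ latticeL ℓ B) = q
      ∧ v = deltaV μ}).topologicalClosure

theorem coe_cosetSubmodule (q : (Fin r → ℤ) ⧸ latticeL ℓ B) :
    (cosetSubmodule ℓ B q : Set (Hsp r)) = cosetSubspace ℓ B q :=
  Submodule.topologicalClosure_coe _

theorem deltaV_mem_cosetSubmodule (μ : Fin r → ℤ) : deltaV μ ∈ cosetSubmodule ℓ B μ :=
  Submodule.le_topologicalClosure _ (Submodule.subset_span ⟨μ, rfl, rfl⟩)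

theorem inner_deltaV_left (μ : Fin r → ℤ) (f : Hsp r) : inner ℂ (deltaV μ) f = f μ := by
  simp [deltaV, lp.inner_single_left]

theorem apply_eq_zero_of_mem_cosetSubmodule {q : (Fin r → ℤ) ⧸ latticeL ℓ B} {f : Hsp r}
    (hf : f ∈ cosetSubmodule ℓ B q) {ν : Fin r → ℤ} (hν : (ν : (Fin r → ℤ) ⧸ latticeL ℓ B) ≠ q) :
    f ν = 0 := by
  let φ : Hsp r →L[ℂ] ℂ := innerSL ℂ (deltaV ν)
  have hφ (g : Hsp r) : φ g = g ν := inner_deltaV_left ν g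
  suffices cosetSubmodule ℓ B q ≤ LinearMap.ker (φ : Hsp r →ₗ[ℂ] ℂ) by
    simpa [hφ] using this hf
  refine Submodule.topologicalClosure_minimal _ (Submodule.span_le.mpr ?_) φ.isClosed_ker
  rintro _ ⟨μ, rfl, rfl⟩
  have hνμ : ν ≠ μ := by rintro rfl; exact hν rfl
  simp [hφ, deltaV, Pi.single_eq_of_ne hνμ]

theorem thetaOp_eq_rankOne (lam μ : Fin r → ℤ) :
    thetaOp lam μ = rankOne ℂ (deltaV (μ + lam)) (deltaV μ) :=
  rfl

theorem thetaOp_apply (lam μ : Fin r → ℤ) (f : Hsp r) :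
    thetaOp lam μ f = f μ • deltaV (μ + lam) := by
  rw [thetaOp_eq_rankOne, rankOne_apply, inner_deltaV_left]

theorem thetaOp_mem_invariantOperators {lam : Fin r → ℤ} (hlam : lam ∈ latticeL ℓ B)
    (μ : Fin r → ℤ) (q : (Fin r → ℤ) ⧸ latticeL ℓ B) :
    thetaOp lam μ ∈ invariantOperators (cosetSubmodule ℓ B q) := by
  refine mem_invariantOperators.mpr fun f hf => ?_
  rw [thetaOp_apply]
  by_cases hμ : (μ : (Fin r → ℤ) ⧸ latticeL ℓ B) = q
  · subst hμ
    refine Submodule.smul_mem _ _ ?_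
    have h := deltaV_mem_cosetSubmodule (ℓ := ℓ) (B := B) (μ + lam)
    rwa [QuotientAddGroup.mk_add_of_mem μ hlam] at h
  · rw [apply_eq_zero_of_mem_cosetSubmodule hf hμ, zero_smul]
    exact Submodule.zero_mem _

def blockDiagonalCompacts (ℓ : ℤ) (B : Matrix (Fin r) (Fin r) ℤ) :
    Submodule ℂ (Hsp r →L[ℂ] Hsp r) :=
  compactOperator (RingHom.id ℂ) (Hsp r) (Hsp r) ⊓ ⨅ q, invariantOperators (cosetSubmodule ℓ B q)

theorem coe_blockDiagonalCompacts :
    (blockDiagonalCompacts ℓ B : Set (Hsp r →L[ℂ] Hsp r)) =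
      {K : Hsp r →L[ℂ] Hsp r | IsCompactOperator ⇑K ∧ ∀ q : (Fin r → ℤ) ⧸ latticeL ℓ B,
        ∀ f ∈ cosetSubspace ℓ B q, K f ∈ cosetSubspace ℓ B q} := by
  ext K
  simp [blockDiagonalCompacts, mem_invariantOperators, ← coe_cosetSubmodule, compactOperator]

theorem isClosed_blockDiagonalCompacts :
    IsClosed (blockDiagonalCompacts ℓ B : Set (Hsp r →L[ℂ] Hsp r)) := by
  rw [blockDiagonalCompacts, Submodule.coe_inf, Submodule.coe_iInf]
  exact isClosed_setOfPred_isCompactOperator.inter <| isClosed_iInter fun q =>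
    isClosed_invariantOperators (Submodule.isClosed_topologicalClosure _)

theorem thetaOp_mem_blockDiagonalCompacts {lam : Fin r → ℤ} (hlam : lam ∈ latticeL ℓ B)
    (μ : Fin r → ℤ) : thetaOp lam μ ∈ blockDiagonalCompacts ℓ B :=
  Submodule.mem_inf.mpr ⟨isCompactOperator_rankOne _ _,
    Submodule.mem_iInf _ |>.mpr (thetaOp_mem_invariantOperators hlam μ)⟩

theorem finsetProj_comp_comp_finsetProj_mem_span {K : Hsp r →L[ℂ] Hsp r}
    (hK : ∀ q, K ∈ invariantOperators (cosetSubmodule ℓ B q)) (F G : Finset (Fin r → ℤ)) :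
    lp.finsetProj F ∘L K ∘L lp.finsetProj G ∈ Submodule.span ℂ
      {T : Hsp r →L[ℂ] Hsp r | ∃ lam ∈ latticeL ℓ B, ∃ μ : Fin r → ℤ, T = thetaOp lam μ} := by
  rw [lp.finsetProj_comp_comp_finsetProj]
  refine Submodule.sum_mem _ fun ν _ => Submodule.sum_mem _ fun μ _ => ?_
  by_cases h : ν - μ ∈ latticeL ℓ B
  · refine Submodule.smul_mem _ _ (Submodule.subset_span ⟨ν - μ, h, μ, ?_⟩)
    rw [thetaOp_eq_rankOne, add_sub_cancel]
    rfl
  · have hKμ := mem_invariantOperators.mp (hK μ) _ (deltaV_mem_cosetSubmodule μ)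
    have hνμ : (ν : (Fin r → ℤ) ⧸ latticeL ℓ B) ≠ μ := fun he =>
      h (QuotientAddGroup.eq_iff_sub_mem.mp he)
    change inner ℂ (deltaV ν) (K (deltaV μ)) • _ ∈ _
    rw [inner_deltaV_left, apply_eq_zero_of_mem_cosetSubmodule hKμ hνμ, zero_smul]
    exact Submodule.zero_mem _

end Coset

theorem closure_span_theta_eq_blockDiagonal_compacts_general {r : ℕ}
    (ℓ : ℤ) (B : Matrix (Fin r) (Fin r) ℤ) :
    closure (↑(Submodule.span ℂ
        {T : Hsp r →L[ℂ] Hsp r | ∃ lam ∈ latticeL ℓ B, ∃ μ : Fin r → ℤ, T = thetaOp lam μ})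
      : Set (Hsp r →L[ℂ] Hsp r))
    = {K : Hsp r →L[ℂ] Hsp r | IsCompactOperator ⇑K ∧
        ∀ q : (Fin r → ℤ) ⧸ latticeL ℓ B,
          ∀ f ∈ cosetSubspace ℓ B q, K f ∈ cosetSubspace ℓ B q} := by
  rw [← coe_blockDiagonalCompacts]
  refine subset_antisymm (closure_minimal ?_ isClosed_blockDiagonalCompacts) fun K hK => ?_
  · exact Submodule.span_le.mpr fun T ⟨lam, hlam, μ, hT⟩ =>
      hT ▸ thetaOp_mem_blockDiagonalCompacts hlam μ
  · obtain ⟨hKc, hKinv⟩ := Submodule.mem_inf.mp hK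
    refine isClosed_closure.mem_of_tendsto (lp.tendsto_finsetProj_comp hKc)
      (Eventually.of_forall fun F => ?_)
    exact isClosed_closure.mem_of_tendsto (lp.tendsto_finsetProj_comp_comp_finsetProj F K)
      (Eventually.of_forall fun G => subset_closure
        (finsetProj_comp_comp_finsetProj_mem_span (Submodule.mem_iInf _ |>.mp hKinv) F G))

/-- The closure, in the operator norm, of the linear span of the rank-one operators
`{θ_{λ,μ} : λ ∈ L, μ ∈ ℤ^r}` equals the set of all compact operators `K` on
`H = ℓ²(ℤ^r; ℂ)` satisfying `K(H_C) ⊆ H_C` for every coset `C ∈ ℤ^r/L`. -/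
theorem closure_span_theta_eq_blockDiagonal_compacts {r : ℕ} (hr : 1 ≤ r)
    (ℓ : ℤ) (hℓ : ℓ ≠ 0) (B : Matrix (Fin r) (Fin r) ℤ)
    (hBsymm : B.IsSymm) (hBpos : (B.map ((↑) : ℤ → ℝ)).PosDef) :
    closure (↑(Submodule.span ℂ
        {T : Hsp r →L[ℂ] Hsp r | ∃ lam ∈ latticeL ℓ B, ∃ μ : Fin r → ℤ, T = thetaOp lam μ})
      : Set (Hsp r →L[ℂ] Hsp r))
    = {K : Hsp r →L[ℂ] Hsp r | IsCompactOperator ⇑K ∧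
        ∀ q : (Fin r → ℤ) ⧸ latticeL ℓ B,
          ∀ f ∈ cosetSubspace ℓ B q, K f ∈ cosetSubspace ℓ B q} :=
  closure_span_theta_eq_blockDiagonal_compacts_general ℓ B
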